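/- arXiv:1903.03991 — 4 statements merged into one kernel-verified Lean document; each statement's English description precedes it below -/
import Mathlib

section
/- For every QDDC formula D over a finite set PV of propositional variables, the language L(D) = { σ ∈ (2^PV)^+ : σ,[0,|σ|−1] ⊨ D } is a regular language over the alphabet 2^PV, i.e., there exists a deterministic finite automaton over alphabet 2^PV whose accepted language is exactly L(D). -/
/-- Propositional formulas over a set `PV` of propositional variables. -/
inductive PropForm (PV : Type) : Type where
  | fls : PropForm PV
  | tru : PropForm PV
  | var : PV → PropForm PV
  | not : PropForm PV → PropForm PV
  | and : PropForm PV → PropForm PV → PropForm PV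
  | or : PropForm PV → PropForm PV → PropForm PV

/-- Evaluation of a propositional formula at a letter (a valuation of `PV`). -/
def PropForm.eval {PV : Type} (v : PV → Bool) : PropForm PV → Bool
  | .fls => false
  | .tru => true
  | .var p => v p
  | .not φ => !(φ.eval v)
  | .and φ ψ => φ.eval v && ψ.eval v
  | .or φ ψ => φ.eval v || ψ.eval v

/-- Comparison operators ⋈ ∈ {<, ≤, =, ≥, >}. -/
inductive Cmp : Type where
  | lt | le | eq | ge | gt

def Cmp.eval : Cmp → ℕ → ℕ → Prop
  | .lt, m, c => m < c
  | .le, m, c => m ≤ c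
  | .eq, m, c => m = c
  | .ge, m, c => m ≥ c
  | .gt, m, c => m > c

/-- Syntax of QDDC formulas over propositional variables `PV`. -/
inductive QDDC (PV : Type) : Type where
  | pt : PropForm PV → QDDC PV                      -- ⟨φ⟩
  | unit : PropForm PV → QDDC PV                    -- [φ]
  | dunit : PropForm PV → QDDC PV                   -- [[φ]]
  | chop : QDDC PV → QDDC PV → QDDC PV              -- D₁ ^ D₂
  | not : QDDC PV → QDDC PV                         -- !D
  | or : QDDC PV → QDDC PV → QDDC PV                -- D₁ || D₂
  | and : QDDC PV → QDDC PV → QDDC PV               -- D₁ && D₂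
  | ex : PV → QDDC PV → QDDC PV                     -- ex p. D
  | all : PV → QDDC PV → QDDC PV                    -- all p. D
  | slen : Cmp → ℕ → QDDC PV                        -- slen ⋈ c
  | scount : PropForm PV → Cmp → ℕ → QDDC PV        -- scount φ ⋈ c
  | sdur : PropForm PV → Cmp → ℕ → QDDC PV          -- sdur φ ⋈ c

/-- `σ'` is a `p`-variant of `σ`: same length, agrees with `σ` on all variables except
possibly `p`. -/
def PVariant {PV : Type} (p : PV) (σ σ' : List (PV → Bool)) : Prop :=
  σ'.length = σ.length ∧
    ∀ i < σ.length, ∀ q, q ≠ p → (σ'.getD i default) q = (σ.getD i default) q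

/-- Satisfaction `σ, [b, e] ⊨ D` of a QDDC formula over the interval `[b, e]`
of the word `σ`. -/
def QDDC.sat {PV : Type} : List (PV → Bool) → ℕ → ℕ → QDDC PV → Prop
  | σ, b, e, .pt φ => b = e ∧ φ.eval (σ.getD b default) = true
  | σ, b, e, .unit φ => b < e ∧ ∀ i, b ≤ i → i < e → φ.eval (σ.getD i default) = true
  | σ, b, e, .dunit φ => ∀ i, b ≤ i → i ≤ e → φ.eval (σ.getD i default) = true
  | σ, b, e, .chop D₁ D₂ => ∃ m, b ≤ m ∧ m ≤ e ∧ QDDC.sat σ b m D₁ ∧ QDDC.sat σ m e D₂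
  | σ, b, e, .not D => ¬ QDDC.sat σ b e D
  | σ, b, e, .or D₁ D₂ => QDDC.sat σ b e D₁ ∨ QDDC.sat σ b e D₂
  | σ, b, e, .and D₁ D₂ => QDDC.sat σ b e D₁ ∧ QDDC.sat σ b e D₂
  | σ, b, e, .ex p D => ∃ σ', PVariant p σ σ' ∧ QDDC.sat σ' b e D
  | σ, b, e, .all p D => ∀ σ', PVariant p σ σ' → QDDC.sat σ' b e D
  | _, b, e, .slen c n => c.eval (e - b) n
  | σ, b, e, .scount φ c n =>
      c.eval ((Finset.Icc b e).filter (fun i => φ.eval (σ.getD i default) = true)).card n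
  | σ, b, e, .sdur φ c n =>
      c.eval ((Finset.Ico b e).filter (fun i => φ.eval (σ.getD i default) = true)).card n

/-- The language of a QDDC formula: all nonempty words `σ` over the alphabet `2^PV`
such that `σ, [0, |σ| - 1] ⊨ D`. -/
def QDDC.lang {PV : Type} (D : QDDC PV) : Language (PV → Bool) :=
  {σ : List (PV → Bool) | σ ≠ [] ∧ QDDC.sat σ 0 (σ.length - 1) D}

/-!
By Myhill–Nerode it suffices that every `lang D` has finitely many left quotients, and this is
proved by induction on `D`. Satisfaction on `[b, e]` only depends on the letters in `[b, e]`, so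
`D₁ ^ D₂` denotes the fusion of the two languages (concatenation sharing the chop letter), and
`ex p` denotes the preimage of `lang D` under the letterwise relation "equal off `p`". The
quotient of a fusion by `u` is determined by the quotient of the first language by `u` and by
the set of quotients of the second language by the suffixes of `u` that start at a chop point;
the quotient of a relational preimage by `u` is determined by the set of quotients by the words
related to `u`. Both are drawn from finite sets. The atoms reduce to counting letters
(possibly without the last one), and counts above `k` are indistinguishable by `⋈ k`.
-/

namespace List

variable {α β : Type*}

theorem forall₂_append_left_iff {R : α → β → Prop} {l₁ l₂ : List α} {l : List β} :
    Forall₂ R (l₁ ++ l₂) l ↔ ∃ m₁ m₂, Forall₂ R l₁ m₁ ∧ Forall₂ R l₂ m₂ ∧ l = m₁ ++ m₂ := by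
  induction l₁ generalizing l with
  | nil => simp
  | cons a l₁ ih =>
    simp only [cons_append, forall₂_cons_left_iff, ih]
    constructor
    · rintro ⟨b, _, hab, ⟨m₁, m₂, h₁, h₂, rfl⟩, rfl⟩
      exact ⟨b :: m₁, m₂, ⟨b, m₁, hab, h₁, rfl⟩, h₂, rfl⟩
    · rintro ⟨_, m₂, ⟨b, m₁, hab, h₁, rfl⟩, h₂, rfl⟩
      exact ⟨b, m₁ ++ m₂, hab, ⟨m₁, m₂, h₁, h₂, rfl⟩, rfl⟩

theorem getD_append_append_length_add {u v w : List α} {i : ℕ} (d : α) (h : i < v.length) :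
    (u ++ v ++ w).getD (u.length + i) d = v.getD i d := by
  rw [getD_append _ _ _ _ (by simp; omega), getD_append_right _ _ _ _ (by omega)]
  simp

theorem card_filter_map_add_getD_append_append (d : α) (p : α → Bool) {u v w : List α}
    {s : Finset ℕ} (hs : ∀ i ∈ s, i < v.length) :
    ((s.map (addLeftEmbedding u.length)).filter fun i => p ((u ++ v ++ w).getD i d) = true).card
      = (s.filter fun i => p (v.getD i d) = true).card := by
  rw [Finset.filter_map, Finset.card_map]
  congr 1
  refine Finset.filter_congr fun i hi => ?_
  simp only [Function.comp_apply, addLeftEmbedding_apply]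
  rw [getD_append_append_length_add _ (hs i hi)]

theorem card_filter_range_getD (d : α) (p : α → Bool) {l : List α} {n : ℕ} (hn : n ≤ l.length) :
    ((Finset.range n).filter fun i => p (l.getD i d) = true).card = (l.take n).countP p := by
  induction l generalizing n with
  | nil => simp_all
  | cons a l ih =>
    cases n with
    | zero => simp
    | succ n =>
      rw [Finset.card_filter, Finset.sum_range_succ', ← Finset.card_filter]
      simp only [getD_cons_succ, getD_cons_zero, take_succ_cons, countP_cons]
      rw [ih (by simpa using hn)]

end List

open List

namespace Language

variable {α β : Type*}

-- `Set.mem_ofPred_eq` and `Set.mem_compl_iff` do not see through the `∈` of `Language`.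
@[simp]
theorem mem_ofPred {p : List α → Prop} {w : List α} :
    @Membership.mem (List α) (Language α) _ (Set.ofPred p) w ↔ p w :=
  Iff.rfl

@[simp]
theorem mem_compl {L : Language α} {w : List α} : w ∈ Lᶜ ↔ w ∉ L :=
  Iff.rfl

theorem isRegular_of_append_mem_iff {L : Language α} {T : Type*} {S : Set T} (hS : S.Finite)
    (f : List α → T) (hf : ∀ u, f u ∈ S) (g : T → List α → Prop)
    (h : ∀ u w, u ++ w ∈ L ↔ g (f u) w) : L.IsRegular :=
  .of_finite_range_leftQuotient <| (hS.image fun t => Set.ofPred (g t)).subset <|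
    Set.range_subset_iff.2 fun u => ⟨f u, hf u, Language.ext fun w => (h u w).symm⟩

theorem isRegular_one : (1 : Language α).IsRegular :=
  isRegular_of_append_mem_iff Set.finite_univ (fun u => u.isEmpty) (fun _ => trivial)
    (fun b w => b = true ∧ w = []) fun u w => by simp [List.isEmpty_iff]

theorem IsRegular.preimage_dropLast {L : Language α} (hL : L.IsRegular) :
    IsRegular ({w | w.dropLast ∈ L} : Language α) :=
  isRegular_of_append_mem_iff (Set.finite_univ.prod hL.finite_range_leftQuotient)
    (fun u => (u.dropLast ∈ L, L.leftQuotient u)) (fun u => ⟨trivial, u, rfl⟩)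
    (fun t w => (w = [] → t.1) ∧ (w ≠ [] → w.dropLast ∈ t.2)) fun u w => by
      rcases eq_or_ne w [] with rfl | hw
      · simp
      · simp [hw, dropLast_append_of_ne_nil hw]

def relPreimage (r : α → β → Prop) (L : Language β) : Language α :=
  {x | ∃ y ∈ L, Forall₂ r x y}

theorem IsRegular.relPreimage {L : Language β} (hL : L.IsRegular) (r : α → β → Prop) :
    (L.relPreimage r).IsRegular :=
  isRegular_of_append_mem_iff hL.finite_range_leftQuotient.finite_subsets
    (fun u => L.leftQuotient '' {v | Forall₂ r u v}) (fun _ => Set.image_subset_range _ _)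
    (fun S w => ∃ z, (∃ P ∈ S, z ∈ P) ∧ Forall₂ r w z) fun u w => by
      simp only [Language.relPreimage, mem_ofPred, forall₂_append_left_iff]
      constructor
      · rintro ⟨_, hy, v, z, hv, hz, rfl⟩
        exact ⟨z, ⟨_, ⟨v, hv, rfl⟩, hy⟩, hz⟩
      · rintro ⟨z, ⟨_, ⟨v, hv, rfl⟩, hy⟩, hz⟩
        exact ⟨v ++ z, hy, v, z, hv, hz, rfl⟩

def fusion (L₁ L₂ : Language α) : Language α :=
  {w | ∃ x a y, w = x ++ a :: y ∧ x ++ [a] ∈ L₁ ∧ a :: y ∈ L₂}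

theorem mem_fusion_iff_take_drop {L₁ L₂ : Language α} {w : List α} :
    w ∈ L₁.fusion L₂ ↔ ∃ m < w.length, w.take (m + 1) ∈ L₁ ∧ w.drop m ∈ L₂ := by
  constructor
  · rintro ⟨x, a, y, rfl, h₁, h₂⟩
    refine ⟨x.length, by simp, ?_, by simpa using h₂⟩
    rwa [append_cons, take_left' (by simp)]
  · rintro ⟨m, hm, h₁, h₂⟩
    refine ⟨w.take m, w[m], w.drop (m + 1), ?_, ?_, ?_⟩
    · rw [← drop_eq_getElem_cons hm, take_append_drop]
    · rwa [← concat_eq_append, take_concat_get hm]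
    · rwa [← drop_eq_getElem_cons hm]

theorem append_mem_fusion_iff {L₁ L₂ : Language α} {u w : List α} :
    u ++ w ∈ L₁.fusion L₂ ↔
      (∃ x a y, u = x ++ a :: y ∧ x ++ [a] ∈ L₁ ∧ w ∈ L₂.leftQuotient (a :: y)) ∨
        w ∈ (L₁.leftQuotient u).fusion L₂ := by
  simp only [fusion, mem_ofPred, mem_leftQuotient]
  constructor
  · rintro ⟨x, a, y, huw, h₁, h₂⟩
    rcases append_eq_append_iff.1 huw with ⟨s, rfl, rfl⟩ | ⟨_ | ⟨b, s⟩, rfl, hs⟩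
    · exact Or.inr ⟨s, a, y, rfl, by simpa using h₁, h₂⟩
    · exact Or.inr ⟨[], a, y, by simpa using hs.symm, by simpa using h₁, h₂⟩
    · obtain ⟨rfl, rfl⟩ := cons_eq_cons.1 hs
      exact Or.inl ⟨x, a, s, rfl, h₁, h₂⟩
  · rintro (⟨x, a, y, rfl, h₁, h₂⟩ | ⟨x, a, y, rfl, h₁, h₂⟩)
    · exact ⟨x, a, y ++ w, by simp, h₁, h₂⟩
    · exact ⟨u ++ x, a, y, by simp, by simpa using h₁, h₂⟩

theorem IsRegular.fusion {L₁ L₂ : Language α} (h₁ : L₁.IsRegular) (h₂ : L₂.IsRegular) :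
    (L₁.fusion L₂).IsRegular :=
  isRegular_of_append_mem_iff
    (h₁.finite_range_leftQuotient.prod h₂.finite_range_leftQuotient.finite_subsets)
    (fun u => (L₁.leftQuotient u,
      {P | ∃ x a y, u = x ++ a :: y ∧ x ++ [a] ∈ L₁ ∧ P = L₂.leftQuotient (a :: y)}))
    (fun u => ⟨⟨u, rfl⟩, by rintro _ ⟨x, a, y, -, -, rfl⟩; exact ⟨_, rfl⟩⟩)
    (fun t w => (∃ P ∈ t.2, w ∈ P) ∨ w ∈ t.1.fusion L₂) fun u w => by
      simp only [append_mem_fusion_iff, Set.mem_ofPred_eq]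
      grind

end Language

theorem Cmp.eval_min_add (c : Cmp) (a t k : ℕ) :
    c.eval (min a (k + 1) + t) k ↔ c.eval (a + t) k := by
  cases c <;> simp only [Cmp.eval] <;> omega

theorem Language.isRegular_cmp_countP {α : Type*} (p : α → Bool) (c : Cmp) (k : ℕ) :
    IsRegular ({w | c.eval (w.countP p) k} : Language α) :=
  isRegular_of_append_mem_iff (Set.finite_Iic (k + 1)) (fun u => min (u.countP p) (k + 1))
    (fun _ => Set.mem_Iic.2 (min_le_right _ _)) (fun m w => c.eval (m + w.countP p) k)
    fun u w => by simp [countP_append, Cmp.eval_min_add]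

namespace QDDC

variable {PV : Type} {σ u v w : List (PV → Bool)} {b e k : ℕ} {φ : PropForm PV} {c : Cmp}

theorem pVariant_iff_forall₂ {p : PV} {τ : List (PV → Bool)} :
    PVariant p σ τ ↔ Forall₂ (fun a b : PV → Bool => ∀ q, q ≠ p → b q = a q) σ τ := by
  rw [forall₂_iff_get, PVariant]
  constructor
  · rintro ⟨hl, h⟩
    refine ⟨hl.symm, fun i h₁ h₂ q hq => ?_⟩
    simpa [getD_eq_getElem, h₁, h₂] using h i h₁ q hq
  · rintro ⟨hl, h⟩
    refine ⟨hl.symm, fun i hi q hq => ?_⟩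
    simpa [getD_eq_getElem, hi, hl ▸ hi] using h i hi (hl ▸ hi) q hq

theorem sat_pt_iff : sat σ b e (pt φ) ↔ sat σ b e (and (slen .eq 0) (scount φ .ge 1)) := by
  simp only [sat, Cmp.eval]
  constructor
  · rintro ⟨rfl, h⟩
    exact ⟨Nat.sub_self _, Finset.card_pos.2 ⟨b, Finset.mem_filter.2 ⟨by simp, h⟩⟩⟩
  · rintro ⟨hbe, hφ⟩
    obtain ⟨i, hi⟩ := Finset.card_pos.1 hφ
    rw [Finset.mem_filter, Finset.mem_Icc] at hi
    obtain rfl : i = b := by omega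
    exact ⟨by omega, hi.2⟩

theorem sat_unit_iff : sat σ b e (unit φ) ↔ sat σ b e (and (slen .ge 1) (sdur φ.not .eq 0)) := by
  simp only [sat, Cmp.eval]
  refine and_congr (by omega) ?_
  simp [Finset.card_eq_zero, Finset.filter_eq_empty_iff, PropForm.eval, and_imp]

theorem sat_dunit_iff : sat σ b e (dunit φ) ↔ sat σ b e (scount φ.not .eq 0) := by
  simp [sat, Cmp.eval, Finset.card_eq_zero, Finset.filter_eq_empty_iff, PropForm.eval, and_imp]

theorem sat_slen_iff : sat σ b e (slen c k) ↔ sat σ b e (sdur .tru c k) := by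
  simp [sat, PropForm.eval]

theorem sat_scount_append_append (he : e < v.length) :
    sat (u ++ v ++ w) (u.length + b) (u.length + e) (scount φ c k) ↔
      sat v b e (scount φ c k) := by
  simp only [sat]
  rw [← Finset.map_add_left_Icc, card_filter_map_add_getD_append_append _ φ.eval
    fun i hi => (Finset.mem_Icc.1 hi).2.trans_lt he]

theorem sat_sdur_append_append (he : e < v.length) :
    sat (u ++ v ++ w) (u.length + b) (u.length + e) (sdur φ c k) ↔
      sat v b e (sdur φ c k) := by
  simp only [sat]
  rw [← Finset.map_add_left_Ico, card_filter_map_add_getD_append_append _ φ.eval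
    fun i hi => (Finset.mem_Ico.1 hi).2.trans he]

theorem sat_slen_append_append (he : e < v.length) :
    sat (u ++ v ++ w) (u.length + b) (u.length + e) (slen c k) ↔ sat v b e (slen c k) := by
  rw [sat_slen_iff, sat_slen_iff]
  exact sat_sdur_append_append he

theorem sat_append_append (D : QDDC PV) (he : e < v.length) :
    sat (u ++ v ++ w) (u.length + b) (u.length + e) D ↔ sat v b e D := by
  induction D generalizing u v w b e with
  | pt φ =>
    rw [sat_pt_iff, sat_pt_iff]
    exact and_congr (sat_slen_append_append he) (sat_scount_append_append he)
  | unit φ =>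
    rw [sat_unit_iff, sat_unit_iff]
    exact and_congr (sat_slen_append_append he) (sat_sdur_append_append he)
  | dunit φ =>
    rw [sat_dunit_iff, sat_dunit_iff]
    exact sat_scount_append_append he
  | slen c k => exact sat_slen_append_append he
  | scount φ c k => exact sat_scount_append_append he
  | sdur φ c k => exact sat_sdur_append_append he
  | chop D₁ D₂ ih₁ ih₂ =>
    simp only [sat]
    constructor
    · rintro ⟨m, hbm, hme, h₁, h₂⟩
      obtain ⟨j, rfl⟩ := Nat.exists_eq_add_of_le ((Nat.le_add_right _ _).trans hbm)
      exact ⟨j, by omega, by omega, (ih₁ (by omega)).1 h₁, (ih₂ he).1 h₂⟩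
    · rintro ⟨m, hbm, hme, h₁, h₂⟩
      exact ⟨u.length + m, by omega, by omega, (ih₁ (by omega)).2 h₁, (ih₂ he).2 h₂⟩
  | not D ih => simp only [sat, ih he]
  | or D₁ D₂ ih₁ ih₂ => simp only [sat, ih₁ he, ih₂ he]
  | and D₁ D₂ ih₁ ih₂ => simp only [sat, ih₁ he, ih₂ he]
  | ex p D ih =>
    simp only [sat, pVariant_iff_forall₂, forall₂_append_left_iff]
    constructor
    · rintro ⟨_, ⟨_, τw, ⟨τu, τv, hu, hv, rfl⟩, -, rfl⟩, h⟩
      rw [hu.length_eq] at h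
      exact ⟨τv, hv, (ih (hv.length_eq ▸ he)).1 h⟩
    · rintro ⟨τv, hv, h⟩
      refine ⟨u ++ τv ++ w, ⟨u ++ τv, w, ⟨u, τv, ?_, hv, rfl⟩, ?_, rfl⟩,
        (ih (hv.length_eq ▸ he)).2 h⟩ <;> exact forall₂_same.2 fun _ _ _ _ => rfl
  | all p D ih =>
    simp only [sat, pVariant_iff_forall₂, forall₂_append_left_iff]
    constructor
    · intro h τv hv
      refine (ih (hv.length_eq ▸ he)).1
        (h (u ++ τv ++ w) ⟨u ++ τv, w, ⟨u, τv, ?_, hv, rfl⟩, ?_, rfl⟩) <;>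
        exact forall₂_same.2 fun _ _ _ _ => rfl
    · rintro h _ ⟨_, τw, ⟨τu, τv, hu, hv, rfl⟩, -, rfl⟩
      rw [hu.length_eq]
      exact (ih (hv.length_eq ▸ he)).2 (h τv hv)

theorem mem_lang {D : QDDC PV} : σ ∈ lang D ↔ σ ≠ [] ∧ sat σ 0 (σ.length - 1) D :=
  Iff.rfl

theorem lang_congr {D D' : QDDC PV} (h : ∀ {σ b e}, sat σ b e D ↔ sat σ b e D') :
    lang D = lang D' :=
  Language.ext fun _ => and_congr_right fun _ => h

theorem sat_zero_iff_take_mem_lang {D : QDDC PV} {m : ℕ} (hm : m < σ.length) :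
    sat σ 0 m D ↔ σ.take (m + 1) ∈ lang D := by
  have h := sat_append_append D (u := []) (v := σ.take (m + 1)) (w := σ.drop (m + 1))
    (b := 0) (e := m) (by simp; omega)
  simp only [nil_append, length_nil, Nat.zero_add, take_append_drop] at h
  rw [h, mem_lang, length_take_of_le (by omega), Nat.add_sub_cancel]
  exact (and_iff_right (ne_nil_of_length_pos (by simp; omega))).symm

theorem sat_iff_drop_mem_lang {D : QDDC PV} {m : ℕ} (hm : m < σ.length) :
    sat σ m (σ.length - 1) D ↔ σ.drop m ∈ lang D := by
  have h := sat_append_append D (u := σ.take m) (v := σ.drop m) (w := [])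
    (b := 0) (e := σ.length - 1 - m) (by simp; omega)
  rw [append_nil, take_append_drop, length_take_of_le hm.le, Nat.add_zero,
    Nat.add_sub_cancel' (by omega)] at h
  rw [h, mem_lang, length_drop, Nat.sub_right_comm]
  exact (and_iff_right (ne_nil_of_length_pos (by simp; omega))).symm

theorem lang_or (D₁ D₂ : QDDC PV) : lang (or D₁ D₂) = lang D₁ + lang D₂ :=
  Language.ext fun _ => and_or_left

theorem lang_and (D₁ D₂ : QDDC PV) : lang (and D₁ D₂) = lang D₁ ⊓ lang D₂ :=
  Language.ext fun _ => and_and_left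

theorem lang_not (D : QDDC PV) : lang (not D) = (1 + lang D)ᶜ := by
  ext σ
  simp only [mem_lang, sat, Language.mem_compl, Language.mem_add, Language.mem_one]
  tauto

theorem lang_chop (D₁ D₂ : QDDC PV) :
    lang (chop D₁ D₂) = (lang D₁).fusion (lang D₂) := by
  ext σ
  rw [Language.mem_fusion_iff_take_drop, mem_lang]
  simp only [sat]
  constructor
  · rintro ⟨hσ, m, -, hm, h₁, h₂⟩
    have hm' : m < σ.length := by have := length_pos_of_ne_nil hσ; omega
    exact ⟨m, hm', (sat_zero_iff_take_mem_lang hm').1 h₁, (sat_iff_drop_mem_lang hm').1 h₂⟩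
  · rintro ⟨m, hm, h₁, h₂⟩
    exact ⟨ne_nil_of_length_pos (by omega), m, Nat.zero_le _, by omega,
      (sat_zero_iff_take_mem_lang hm).2 h₁, (sat_iff_drop_mem_lang hm).2 h₂⟩

theorem lang_ex (p : PV) (D : QDDC PV) :
    lang (ex p D) = (lang D).relPreimage fun a b => ∀ q, q ≠ p → b q = a q := by
  ext σ
  simp only [mem_lang, sat, Language.relPreimage, Language.mem_ofPred, pVariant_iff_forall₂]
  constructor
  · rintro ⟨hσ, τ, hστ, h⟩
    refine ⟨τ, ⟨?_, hστ.length_eq ▸ h⟩, hστ⟩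
    rintro rfl
    exact hσ (forall₂_nil_right_iff.1 hστ)
  · rintro ⟨τ, ⟨hτ, h⟩, hστ⟩
    refine ⟨?_, τ, hστ, hστ.length_eq ▸ h⟩
    rintro rfl
    exact hτ (forall₂_nil_left_iff.1 hστ)

theorem lang_all (p : PV) (D : QDDC PV) :
    lang (all p D) = (1 + (lang D)ᶜ.relPreimage fun a b => ∀ q, q ≠ p → b q = a q)ᶜ := by
  ext σ
  rw [Language.mem_compl, Language.mem_add, Language.mem_one, mem_lang, not_or]
  refine and_congr_right fun hσ => ?_
  simp only [sat, Language.relPreimage, Language.mem_ofPred, Language.mem_compl, mem_lang,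
    pVariant_iff_forall₂, not_exists, not_and]
  refine forall_congr' fun τ => ⟨fun h hτ hστ => ?_, fun h hστ => ?_⟩
  · exact hτ (fun hτ => hσ (forall₂_nil_right_iff.1 (hτ ▸ hστ))) (hστ.length_eq ▸ h hστ)
  · by_contra hs
    exact h (fun _ => hστ.length_eq ▸ hs) hστ

theorem lang_scount (φ : PropForm PV) (c : Cmp) (k : ℕ) :
    lang (scount φ c k) = {σ | σ ≠ [] ∧ c.eval (σ.countP φ.eval) k} := by
  ext σ
  simp only [mem_lang, sat, Language.mem_ofPred]
  refine and_congr_right fun hσ => ?_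
  have : Finset.Icc 0 (σ.length - 1) = Finset.range σ.length := by
    have := length_pos_of_ne_nil hσ
    ext
    simp
    omega
  rw [this, card_filter_range_getD _ φ.eval le_rfl, take_length]

theorem lang_sdur (φ : PropForm PV) (c : Cmp) (k : ℕ) :
    lang (sdur φ c k) = {σ | σ ≠ [] ∧ c.eval (σ.dropLast.countP φ.eval) k} := by
  ext σ
  simp only [mem_lang, sat, Language.mem_ofPred]
  rw [← Finset.range_eq_Ico, card_filter_range_getD _ φ.eval (Nat.sub_le _ _),
    ← dropLast_eq_take]

theorem isRegular_lang_scount (φ : PropForm PV) (c : Cmp) (k : ℕ) :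
    (lang (scount φ c k)).IsRegular := by
  rw [lang_scount]
  exact Language.isRegular_one.compl.inf (Language.isRegular_cmp_countP _ c k)

theorem isRegular_lang_sdur (φ : PropForm PV) (c : Cmp) (k : ℕ) :
    (lang (sdur φ c k)).IsRegular := by
  rw [lang_sdur]
  exact Language.isRegular_one.compl.inf (Language.isRegular_cmp_countP _ c k).preimage_dropLast

end QDDC

open QDDC

theorem qddc_lang_isRegular_general {PV : Type} (D : QDDC PV) :
    (QDDC.lang D).IsRegular := by
  induction D with
  | pt φ =>
    rw [lang_congr sat_pt_iff, lang_and, lang_congr sat_slen_iff]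
    exact (isRegular_lang_sdur _ _ _).inf (isRegular_lang_scount _ _ _)
  | unit φ =>
    rw [lang_congr sat_unit_iff, lang_and, lang_congr sat_slen_iff]
    exact (isRegular_lang_sdur _ _ _).inf (isRegular_lang_sdur _ _ _)
  | dunit φ => rw [lang_congr sat_dunit_iff]; exact isRegular_lang_scount _ _ _
  | slen c k => rw [lang_congr sat_slen_iff]; exact isRegular_lang_sdur _ _ _
  | scount φ c k => exact isRegular_lang_scount φ c k
  | sdur φ c k => exact isRegular_lang_sdur φ c k
  | chop D₁ D₂ ih₁ ih₂ => rw [lang_chop]; exact ih₁.fusion ih₂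
  | not D ih => rw [lang_not]; exact (Language.isRegular_one.add ih).compl
  | or D₁ D₂ ih₁ ih₂ => rw [lang_or]; exact ih₁.add ih₂
  | and D₁ D₂ ih₁ ih₂ => rw [lang_and]; exact ih₁.inf ih₂
  | ex p D ih => rw [lang_ex]; exact ih.relPreimage _
  | all p D ih => rw [lang_all]; exact (Language.isRegular_one.add (ih.compl.relPreimage _)).compl

/-- For every QDDC formula `D` over a finite set `PV` of propositional
variables, the language `L(D)` is regular over the alphabet `2^PV`, i.e. it is accepted
by a deterministic finite automaton. -/
theorem qddc_lang_isRegular {PV : Type} [Fintype PV] [DecidableEq PV] (D : QDDC PV) :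
    (QDDC.lang D).IsRegular :=
  qddc_lang_isRegular_general D
end

section
/- Let A = (Q, Σ, s0, δ, F) be a total DFA over Σ = 2^I × 2^O with winning set G. If s0 ∉ G, then there exists no supervisor S over (I, O) with L(S) ⊆ L(A); i.e., the specification 'invariantly satisfy A' is unrealizable. -/
/-!
A supervisor `S` with `L(S) ⊆ L(A)` yields a set of DFA states closed under the
controllable-predecessor condition: the states `A` reaches along words of `L(S)`. They all
lie in `F`, the start state is among them (the empty word is in `L(S)`), and from any of
them every input can be answered, since non-blocking of `S` extends each word of `L(S)`
by a letter with the given input. By maximality of the winning set this set lies in `G`,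
so `s₀ ∈ G`.
-/

/-- A letter of the alphabet `Σ = 2^I × 2^O`: a valuation of the input variables
together with a valuation of the output variables. -/
abbrev Letter (I O : Type) : Type := (I → Bool) × (O → Bool)

/-- An output-nondeterministic Mealy machine over input variables `I` and output
variables `O`: a total deterministic finite automaton over `Σ = 2^I × 2^O` with a
distinguished reject state which is the unique non-final state and is a sink, and
whose initial state is final. -/
structure Mealy (I O Q : Type) where
  step : Q → Letter I O → Q
  start : Q
  reject : Q
  start_ne_reject : start ≠ reject
  reject_sink : ∀ a, step reject a = reject

namespace Mealy

variable {I O Q : Type}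

/-- The extended transition function. -/
def evalFrom (M : Mealy I O Q) (q : Q) (w : List (Letter I O)) : Q :=
  w.foldl M.step q

/-- The language accepted by a Mealy machine: since the reject state is the unique
non-final state and is a sink, a word is accepted iff its run never reaches the
reject state. -/
def lang (M : Mealy I O Q) : Set (List (Letter I O)) :=
  {w | M.evalFrom M.start w ≠ M.reject}

/-- A Mealy machine is non-blocking if from every final state and every input there
is an output leading to a final state.  A supervisor is a non-blocking
output-nondeterministic Mealy machine. -/
def NonBlocking (M : Mealy I O Q) : Prop :=
  ∀ q, q ≠ M.reject → ∀ i : I → Bool, ∃ o : O → Bool, M.step q (i, o) ≠ M.reject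

/-- A Mealy machine is deterministic if from every final state and every input at
most one output avoids the reject state.  A controller is a deterministic
supervisor. -/
def Deterministic (M : Mealy I O Q) : Prop :=
  ∀ q, q ≠ M.reject → ∀ i : I → Bool, ∀ o₁ o₂ : O → Bool,
    M.step q (i, o₁) ≠ M.reject → M.step q (i, o₂) ≠ M.reject → o₁ = o₂

end Mealy

namespace Mealy

variable {I O Q R : Type}

theorem nil_mem_lang (M : Mealy I O Q) : [] ∈ M.lang :=
  M.start_ne_reject

theorem NonBlocking.exists_append_mem_lang {M : Mealy I O Q} (hM : M.NonBlocking)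
    {w : List (Letter I O)} (hw : w ∈ M.lang) (i : I → Bool) :
    ∃ o : O → Bool, w ++ [(i, o)] ∈ M.lang := by
  obtain ⟨o, ho⟩ := hM _ hw i
  exact ⟨o, by simpa [lang, evalFrom, List.foldl_append] using ho⟩

def runImage (M : Mealy I O Q) (δ : R → Letter I O → R) (s₀ : R) : Set R :=
  (fun w => w.foldl δ s₀) '' M.lang

theorem start_mem_runImage (M : Mealy I O Q) (δ : R → Letter I O → R) (s₀ : R) :
    s₀ ∈ M.runImage δ s₀ :=
  ⟨[], M.nil_mem_lang, rfl⟩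

theorem NonBlocking.runImage_closed {M : Mealy I O Q} (hM : M.NonBlocking)
    (δ : R → Letter I O → R) (s₀ : R) :
    ∀ s ∈ M.runImage δ s₀, ∀ i : I → Bool, ∃ o : O → Bool,
      δ s (i, o) ∈ M.runImage δ s₀ := by
  rintro _ ⟨w, hw, rfl⟩ i
  obtain ⟨o, ho⟩ := hM.exists_append_mem_lang hw i
  exact ⟨o, w ++ [(i, o)], ho, by simp [List.foldl_append]⟩

end Mealy

theorem unrealizable_of_start_not_winning_general {I O Q : Type}
    (δ : Q → Letter I O → Q) (s₀ : Q) (F G : Set Q)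
    (hGmax : ∀ X ⊆ F, (∀ s ∈ X, ∀ i : I → Bool, ∃ o : O → Bool, δ s (i, o) ∈ X) →
      X ⊆ G)
    (hs₀ : s₀ ∉ G) :
    ¬ ∃ (Q' : Type) (_ : Fintype Q') (S : Mealy I O Q'),
        S.NonBlocking ∧ S.lang ⊆ {w : List (Letter I O) | w.foldl δ s₀ ∈ F} := by
  rintro ⟨Q', _, S, hNB, hsub⟩
  exact hs₀ <| hGmax _ (Set.image_subset_iff.2 hsub) (hNB.runImage_closed δ s₀)
    (S.start_mem_runImage δ s₀)

/-- if `G` is the winning set (the greatest subset of `F` closed under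
the controllable-predecessor property) of the total DFA `(Q, Σ, s₀, δ, F)` and
`s₀ ∉ G`, then there is no supervisor whose language is contained in the language of
the DFA: the specification "invariantly satisfy `A`" is unrealizable. -/
theorem unrealizable_of_start_not_winning {I O Q : Type} [Fintype I] [Fintype O]
    [Fintype Q] (δ : Q → Letter I O → Q) (s₀ : Q) (F G : Set Q)
    (hGF : G ⊆ F)
    (hGinv : ∀ s ∈ G, ∀ i : I → Bool, ∃ o : O → Bool, δ s (i, o) ∈ G)
    (hGmax : ∀ X ⊆ F, (∀ s ∈ X, ∀ i : I → Bool, ∃ o : O → Bool, δ s (i, o) ∈ X) →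
      X ⊆ G)
    (hs₀ : s₀ ∉ G) :
    ¬ ∃ (Q' : Type) (_ : Fintype Q') (S : Mealy I O Q'),
        S.NonBlocking ∧ S.lang ⊆ {w : List (Letter I O) | w.foldl δ s₀ ∈ F} :=
  unrealizable_of_start_not_winning_general δ s₀ F G hGmax hs₀
end

section
/- Let L_h ⊆ Σ^* (hard requirement) and C ⊆ Σ^* (soft requirement) be regular languages over Σ = 2^I × 2^O, and let H ∈ ℕ. If there exists at least one supervisor S0 with L(S0) ⊆ L_h, then there exists a controller Cnt with L(Cnt) ⊆ L_h such that for every supervisor S with L(S) ⊆ L_h, ValAvgMin_H(S, C) ≤ ValAvgMin_H(Cnt, C); i.e., the synthesized controller invariantly satisfies the hard requirement and is H-optimal for the soft requirement among all supervisors satisfying the hard requirement. -/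
open Classical in
/-- `Value_C(σ)`: the number of positions `j < |σ|` such that the prefix of `σ` of
length `j + 1` belongs to `C`. -/
noncomputable def valueC {A : Type} (C : Set (List A)) (σ : List A) : ℕ :=
  ((Finset.range σ.length).filter (fun j => σ.take (j + 1) ∈ C)).card

/-- `max { Value_C(ii, oo) : oo ∈ S[ii] }` for an input sequence `ii` of length `H`. -/
noncomputable def Mealy.VMaxC {I O Q : Type} (S : Mealy I O Q)
    (C : Set (List (Letter I O))) {H : ℕ} (ii : Fin H → (I → Bool)) : ℕ :=
  sSup {v : ℕ | ∃ oo : Fin H → (O → Bool),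
    (List.ofFn ii).zip (List.ofFn oo) ∈ S.lang ∧
    v = valueC C ((List.ofFn ii).zip (List.ofFn oo))}

/-- `min { Value_C(ii, oo) : oo ∈ S[ii] }` for an input sequence `ii` of length `H`. -/
noncomputable def Mealy.VMinC {I O Q : Type} (S : Mealy I O Q)
    (C : Set (List (Letter I O))) {H : ℕ} (ii : Fin H → (I → Bool)) : ℕ :=
  sInf {v : ℕ | ∃ oo : Fin H → (O → Bool),
    (List.ofFn ii).zip (List.ofFn oo) ∈ S.lang ∧
    v = valueC C ((List.ofFn ii).zip (List.ofFn oo))}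

/-- `ValAvgMax_H(S, C) = 2^{-|I|·H} Σ_{ii ∈ (2^I)^H} max { Value_C(ii,oo) : oo ∈ S[ii] }`. -/
noncomputable def Mealy.ValAvgMaxC {I O Q : Type} [Fintype I] [DecidableEq I]
    [Fintype O] [DecidableEq O] (S : Mealy I O Q) (C : Set (List (Letter I O)))
    (H : ℕ) : ℝ :=
  (∑ ii : Fin H → (I → Bool), (S.VMaxC C ii : ℝ)) / 2 ^ (Fintype.card I * H)

/-- `ValAvgMin_H(S, C) = 2^{-|I|·H} Σ_{ii ∈ (2^I)^H} min { Value_C(ii,oo) : oo ∈ S[ii] }`. -/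
noncomputable def Mealy.ValAvgMinC {I O Q : Type} [Fintype I] [DecidableEq I]
    [Fintype O] [DecidableEq O] (S : Mealy I O Q) (C : Set (List (Letter I O)))
    (H : ℕ) : ℝ :=
  (∑ ii : Fin H → (I → Bool), (S.VMinC C ii : ℝ)) / 2 ^ (Fintype.card I * H)

/-! Every supervisor contains a controller: fixing, in each state and for each input, one
output that keeps the supervisor alive yields a deterministic non-blocking machine whose
language is contained in the supervisor's. A smaller language leaves fewer output sequences
to minimise over, so the controller's worst-case value on every input sequence is at least
the supervisor's. It therefore suffices to maximise over controllers, and the sums of these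
worst-case values are natural numbers bounded by `H · 2^{|I|·H}`, so a maximiser exists. -/

lemma valueC_le_length {A : Type} (C : Set (List A)) (σ : List A) :
    valueC C σ ≤ σ.length := by
  classical
  exact (Finset.card_filter_le _ _).trans (Finset.card_range _).le

namespace Mealy

variable {I O Q Q' : Type}

lemma evalFrom_cons (S : Mealy I O Q) (q : Q) (a : Letter I O) (w : List (Letter I O)) :
    S.evalFrom q (a :: w) = S.evalFrom (S.step q a) w := rfl

lemma evalFrom_reject (S : Mealy I O Q) (w : List (Letter I O)) :
    S.evalFrom S.reject w = S.reject := by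
  induction w with
  | nil => rfl
  | cons a w ih => rwa [evalFrom_cons, S.reject_sink]

lemma NonBlocking.exists_evalFrom_zip_ne_reject {S : Mealy I O Q} (hS : S.NonBlocking) :
    ∀ (ii : List (I → Bool)) {q : Q}, q ≠ S.reject →
      ∃ oo : List (O → Bool), oo.length = ii.length ∧ S.evalFrom q (ii.zip oo) ≠ S.reject
  | [], _, hq => ⟨[], rfl, hq⟩
  | i :: ii, q, hq => by
    obtain ⟨o, ho⟩ := hS q hq i
    obtain ⟨oo, hlen, hoo⟩ := exists_evalFrom_zip_ne_reject hS ii ho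
    exact ⟨o :: oo, by simp [hlen], hoo⟩

lemma NonBlocking.exists_zip_mem_lang {S : Mealy I O Q} (hS : S.NonBlocking) {H : ℕ}
    (ii : Fin H → (I → Bool)) :
    ∃ oo : Fin H → (O → Bool), (List.ofFn ii).zip (List.ofFn oo) ∈ S.lang := by
  obtain ⟨oo, hlen, hoo⟩ := hS.exists_evalFrom_zip_ne_reject (List.ofFn ii) S.start_ne_reject
  rw [List.length_ofFn] at hlen
  subst hlen
  exact ⟨oo.get, by rwa [List.ofFn_get]⟩

open Classical in
noncomputable def restrict (S : Mealy I O Q) (g : Q → (I → Bool) → (O → Bool)) :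
    Mealy I O Q where
  step q a := if a.2 = g q a.1 then S.step q a else S.reject
  start := S.start
  reject := S.reject
  start_ne_reject := S.start_ne_reject
  reject_sink a := by split_ifs <;> simp [S.reject_sink]

variable (S : Mealy I O Q) (g : Q → (I → Bool) → (O → Bool))

open Classical in
lemma restrict_step (q : Q) (a : Letter I O) :
    (S.restrict g).step q a = if a.2 = g q a.1 then S.step q a else S.reject := rfl

lemma restrict_evalFrom_eq_or (q : Q) (w : List (Letter I O)) :
    (S.restrict g).evalFrom q w = S.evalFrom q w ∨ (S.restrict g).evalFrom q w = S.reject := by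
  induction w generalizing q with
  | nil => exact Or.inl rfl
  | cons a w ih =>
    rw [evalFrom_cons, evalFrom_cons, restrict_step]
    split_ifs
    · exact ih _
    · exact Or.inr ((S.restrict g).evalFrom_reject w)

lemma restrict_lang_subset : (S.restrict g).lang ⊆ S.lang := by
  intro w hw
  rcases S.restrict_evalFrom_eq_or g S.start w with h | h
  · change S.evalFrom S.start w ≠ S.reject
    rwa [← h]
  · exact absurd h hw

lemma restrict_deterministic : (S.restrict g).Deterministic := by
  have hout : ∀ q i o, (S.restrict g).step q (i, o) ≠ S.reject → o = g q i := by
    intro q i o h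
    by_contra ho
    exact h (if_neg ho)
  intro q _ i o₁ o₂ h₁ h₂
  rw [hout q i o₁ h₁, hout q i o₂ h₂]

lemma restrict_nonBlocking (hg : ∀ q, q ≠ S.reject → ∀ i, S.step q (i, g q i) ≠ S.reject) :
    (S.restrict g).NonBlocking := fun q hq i =>
  ⟨g q i, by rw [restrict_step, if_pos rfl]; exact hg q hq i⟩

variable {S}

lemma NonBlocking.exists_controller_lang_subset (hS : S.NonBlocking) :
    ∃ T : Mealy I O Q, T.NonBlocking ∧ T.Deterministic ∧ T.lang ⊆ S.lang := by
  classical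
  let g : Q → (I → Bool) → (O → Bool) := fun q i =>
    if hq : q = S.reject then fun _ => false else (hS q hq i).choose
  have hg : ∀ q, q ≠ S.reject → ∀ i, S.step q (i, g q i) ≠ S.reject := fun q hq i => by
    simpa only [g, dif_neg hq] using (hS q hq i).choose_spec
  exact ⟨S.restrict g, S.restrict_nonBlocking g hg, S.restrict_deterministic g,
    S.restrict_lang_subset g⟩

variable {C : Set (List (Letter I O))} {H : ℕ}

lemma VMinC_le (S : Mealy I O Q) (ii : Fin H → (I → Bool)) : S.VMinC C ii ≤ H := by
  rcases Set.eq_empty_or_nonempty {v : ℕ | ∃ oo : Fin H → (O → Bool),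
      (List.ofFn ii).zip (List.ofFn oo) ∈ S.lang ∧
      v = valueC C ((List.ofFn ii).zip (List.ofFn oo))} with hempty | hne
  · simp only [VMinC, hempty, Nat.sInf_empty, zero_le]
  · obtain ⟨oo, -, hv⟩ := Nat.sInf_mem hne
    rw [VMinC, hv]
    simpa using valueC_le_length C ((List.ofFn ii).zip (List.ofFn oo))

lemma VMinC_le_VMinC_of_lang_subset {T : Mealy I O Q'} (hT : T.NonBlocking)
    (hTS : T.lang ⊆ S.lang) (ii : Fin H → (I → Bool)) : S.VMinC C ii ≤ T.VMinC C ii := by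
  refine csInf_le_csInf' ?_ ?_
  · obtain ⟨oo, hoo⟩ := hT.exists_zip_mem_lang ii
    exact ⟨_, oo, hoo, rfl⟩
  · rintro v ⟨oo, hoo, rfl⟩
    exact ⟨oo, hTS hoo, rfl⟩

lemma ValAvgMinC_le_ValAvgMinC [Fintype I] [DecidableEq I] [Fintype O] [DecidableEq O]
    {T : Mealy I O Q'}
    (h : ∑ ii : Fin H → (I → Bool), S.VMinC C ii ≤ ∑ ii : Fin H → (I → Bool), T.VMinC C ii) :
    S.ValAvgMinC C H ≤ T.ValAvgMinC C H := by
  unfold ValAvgMinC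
  exact div_le_div_of_nonneg_right (by exact_mod_cast h) (by positivity)

end Mealy

lemma exists_controller_maximizing_sum_VMinC {I O : Type} [Fintype I] [DecidableEq I]
    (Lh C : Set (List (Letter I O))) (H : ℕ)
    (hreal : ∃ (Q₀ : Type) (_ : Fintype Q₀) (S₀ : Mealy I O Q₀), S₀.NonBlocking ∧ S₀.lang ⊆ Lh) :
    ∃ (Q : Type) (_ : Fintype Q) (Cnt : Mealy I O Q),
      Cnt.NonBlocking ∧ Cnt.Deterministic ∧ Cnt.lang ⊆ Lh ∧
      ∀ (Q' : Type) [Fintype Q'] (T : Mealy I O Q'), T.NonBlocking → T.Deterministic →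
        T.lang ⊆ Lh →
          ∑ ii : Fin H → (I → Bool), T.VMinC C ii ≤ ∑ ii : Fin H → (I → Bool), Cnt.VMinC C ii := by
  let V : Set ℕ := {n | ∃ (Q : Type) (_ : Fintype Q) (Cnt : Mealy I O Q),
    Cnt.NonBlocking ∧ Cnt.Deterministic ∧ Cnt.lang ⊆ Lh ∧
      n = ∑ ii : Fin H → (I → Bool), Cnt.VMinC C ii}
  have hne : V.Nonempty := by
    obtain ⟨Q₀, _, S₀, hNB, hsub⟩ := hreal
    obtain ⟨T, hT, hdet, hTS⟩ := hNB.exists_controller_lang_subset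
    exact ⟨_, Q₀, inferInstance, T, hT, hdet, hTS.trans hsub, rfl⟩
  have hbdd : BddAbove V := by
    refine ⟨Fintype.card (Fin H → (I → Bool)) * H, ?_⟩
    rintro n ⟨Q, _, Cnt, -, -, -, rfl⟩
    simpa using Finset.sum_le_card_nsmul Finset.univ _ H fun ii _ => Cnt.VMinC_le (C := C) ii
  obtain ⟨Q, _, Cnt, hNB, hdet, hsub, hmax⟩ := Nat.sSup_mem hne hbdd
  exact ⟨Q, inferInstance, Cnt, hNB, hdet, hsub, fun Q' _ T hT hTdet hTsub =>
    hmax ▸ le_csSup hbdd ⟨Q', inferInstance, T, hT, hTdet, hTsub, rfl⟩⟩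

theorem exists_H_optimal_controller_general {I O : Type} [Fintype I] [DecidableEq I]
    [Fintype O] [DecidableEq O]
    (Lh C : Language (Letter I O)) (H : ℕ)
    (hreal : ∃ (Q₀ : Type) (_ : Fintype Q₀) (S₀ : Mealy I O Q₀),
      S₀.NonBlocking ∧ S₀.lang ⊆ Lh) :
    ∃ (Q : Type) (_ : Fintype Q) (Cnt : Mealy I O Q),
      Cnt.NonBlocking ∧ Cnt.Deterministic ∧ Cnt.lang ⊆ Lh ∧
      ∀ (Q' : Type) [Fintype Q'] (S : Mealy I O Q'), S.NonBlocking → S.lang ⊆ Lh →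
        S.ValAvgMinC C H ≤ Cnt.ValAvgMinC C H := by
  obtain ⟨Q, _, Cnt, hNB, hdet, hsub, hmax⟩ :=
    exists_controller_maximizing_sum_VMinC Lh C H hreal
  refine ⟨Q, inferInstance, Cnt, hNB, hdet, hsub, fun Q' _ S hS hSsub => ?_⟩
  obtain ⟨T, hT, hTdet, hTS⟩ := hS.exists_controller_lang_subset
  refine Mealy.ValAvgMinC_le_ValAvgMinC ?_
  calc ∑ ii : Fin H → (I → Bool), S.VMinC C ii
      ≤ ∑ ii : Fin H → (I → Bool), T.VMinC C ii :=
        Finset.sum_le_sum fun ii _ => Mealy.VMinC_le_VMinC_of_lang_subset hT hTS ii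
    _ ≤ ∑ ii : Fin H → (I → Bool), Cnt.VMinC C ii := hmax Q' T hT hTdet (hTS.trans hSsub)

/-- given regular hard and soft requirements `Lh` and `C` and a horizon
`H`, if some supervisor invariantly satisfies the hard requirement (`L(S₀) ⊆ Lh`),
then there is a controller `Cnt` with `L(Cnt) ⊆ Lh` that is `H`-optimal for the soft
requirement among all supervisors satisfying the hard requirement:
`ValAvgMin_H(S, C) ≤ ValAvgMin_H(Cnt, C)` for every such supervisor `S`. -/
theorem exists_H_optimal_controller {I O : Type} [Fintype I] [DecidableEq I]
    [Fintype O] [DecidableEq O]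
    (Lh C : Language (Letter I O)) (hLh : Lh.IsRegular) (hC : C.IsRegular) (H : ℕ)
    (hreal : ∃ (Q₀ : Type) (_ : Fintype Q₀) (S₀ : Mealy I O Q₀),
      S₀.NonBlocking ∧ S₀.lang ⊆ Lh) :
    ∃ (Q : Type) (_ : Fintype Q) (Cnt : Mealy I O Q),
      Cnt.NonBlocking ∧ Cnt.Deterministic ∧ Cnt.lang ⊆ Lh ∧
      ∀ (Q' : Type) [Fintype Q'] (S : Mealy I O Q'), S.NonBlocking → S.lang ⊆ Lh →
        S.ValAvgMinC C H ≤ Cnt.ValAvgMinC C H :=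
  exists_H_optimal_controller_general Lh C H hreal
end

section
/- Fix n clients with inputs I = {r_1,…,r_n} and outputs O = {a_1,…,a_n}. If 1 ≤ k < n, then there is no supervisor S over (I, O) such that every word in L(S) satisfies both Mutex(n) and Response(n, k); in particular the invariance specification ArbCommit(n, k) is unrealizable when the response bound k is smaller than the number of clients n. -/
/-- `Mutex(n)`: in every letter of the word at most one acknowledgement is true. -/
def Mutex (n : ℕ) (σ : List (Letter (Fin n) (Fin n))) : Prop :=
  ∀ l ∈ σ, ∀ i j : Fin n, l.2 i = true → l.2 j = true → i = j

/-- `Response(n, k)`: for every client `i` and every block of `k` consecutive positions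
at all of which `r_i` is true, `a_i` is true at at least one of those positions. -/
def Response (n k : ℕ) (σ : List (Letter (Fin n) (Fin n))) : Prop :=
  ∀ i : Fin n, ∀ b : ℕ, b + k ≤ σ.length →
    (∀ j, b ≤ j → j < b + k → (σ.getD j default).1 i = true) →
    ∃ j, b ≤ j ∧ j < b + k ∧ (σ.getD j default).2 i = true

/-!
Let every client request at each of the first `k` steps. A non-blocking supervisor can answer
these inputs while staying accepting, and in the resulting word `Response(n, k)` forces every
client to be acknowledged at one of those `k` steps, while `Mutex(n)` allows at most one
acknowledgement per step. By pigeonhole `n ≤ k`.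
-/

namespace Mealy

variable {I O Q : Type} {M : Mealy I O Q}

theorem NonBlocking.exists_evalFrom_ne_reject (hM : M.NonBlocking) :
    ∀ (inputs : List (I → Bool)) {q : Q}, q ≠ M.reject →
      ∃ w : List (Letter I O), w.map Prod.fst = inputs ∧ M.evalFrom q w ≠ M.reject
  | [], _, hq => ⟨[], rfl, hq⟩
  | i :: inputs, q, hq => by
    obtain ⟨o, ho⟩ := hM q hq i
    obtain ⟨w, hw, hrun⟩ := hM.exists_evalFrom_ne_reject inputs ho
    exact ⟨(i, o) :: w, by simp [hw], hrun⟩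

theorem NonBlocking.exists_mem_lang (hM : M.NonBlocking) (inputs : List (I → Bool)) :
    ∃ w ∈ M.lang, w.map Prod.fst = inputs := by
  obtain ⟨w, hw, hrun⟩ := hM.exists_evalFrom_ne_reject inputs M.start_ne_reject
  exact ⟨w, hrun, hw⟩

end Mealy

section Arbiter

variable {n k : ℕ} {w : List (Letter (Fin n) (Fin n))}

theorem Response.exists_ack_of_requests
    (hreq : w.map Prod.fst = List.replicate k fun _ => true) (hresp : Response n k w)
    (i : Fin n) : ∃ j : Fin k, (w.getD j default).2 i = true := by
  have hlen : w.length = k := by simpa using congrArg List.length hreq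
  obtain ⟨j, -, hjk, hack⟩ := hresp i 0 (by omega) fun j _ hjk => by
    have hj : j < w.length := by omega
    have hrow := congrArg (·[j]?) hreq
    simp only [List.getElem?_map, List.getElem?_eq_getElem hj,
      List.getElem?_replicate_of_lt (by omega : j < k), Option.map_some,
      Option.some.injEq] at hrow
    rw [List.getD_eq_getElem _ _ hj, hrow]
  exact ⟨⟨j, by omega⟩, hack⟩

theorem Mutex.eq_of_ack {i₁ i₂ : Fin n} {j : ℕ} (hmutex : Mutex n w) (hj : j < w.length)
    (h₁ : (w.getD j default).2 i₁ = true) (h₂ : (w.getD j default).2 i₂ = true) :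
    i₁ = i₂ := by
  rw [List.getD_eq_getElem _ _ hj] at h₁ h₂
  exact hmutex _ (List.getElem_mem hj) i₁ i₂ h₁ h₂

theorem le_of_mutex_of_response
    (hreq : w.map Prod.fst = List.replicate k fun _ => true)
    (hmutex : Mutex n w) (hresp : Response n k w) : n ≤ k := by
  have hlen : w.length = k := by simpa using congrArg List.length hreq
  choose ack hack using hresp.exists_ack_of_requests hreq
  have hinj : Function.Injective ack := fun i₁ i₂ h =>
    hmutex.eq_of_ack (hlen ▸ (ack i₂).2) (h ▸ hack i₁) (hack i₂)
  simpa using Fintype.card_le_of_injective ack hinj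

end Arbiter

theorem arbiter_unrealizable_general (n k : ℕ) (hkn : k < n) :
    ¬ ∃ (Q : Type) (_ : Fintype Q) (S : Mealy (Fin n) (Fin n) Q),
        S.NonBlocking ∧ ∀ w ∈ S.lang, Mutex n w ∧ Response n k w := by
  rintro ⟨Q, _, S, hNB, hSpec⟩
  obtain ⟨w, hw, hreq⟩ := hNB.exists_mem_lang (List.replicate k fun _ => true)
  obtain ⟨hmutex, hresp⟩ := hSpec w hw
  exact (le_of_mutex_of_response hreq hmutex hresp).not_gt hkn

/-- if `1 ≤ k < n`, then no supervisor over inputs `r₁,…,r_n` and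
outputs `a₁,…,a_n` has all of its accepted words satisfying both `Mutex(n)` and
`Response(n, k)`: the invariance specification `ArbCommit(n, k)` is unrealizable when
the response bound `k` is smaller than the number of clients `n`. -/
theorem arbiter_unrealizable (n k : ℕ) (hk : 1 ≤ k) (hkn : k < n) :
    ¬ ∃ (Q : Type) (_ : Fintype Q) (S : Mealy (Fin n) (Fin n) Q),
        S.NonBlocking ∧ ∀ w ∈ S.lang, Mutex n w ∧ Response n k w :=
  arbiter_unrealizable_general n k hkn
end
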